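/- The functor K̊ = k̊ ∘ U : Grp → Graph, where U : Grp → Set is the forgetful functor and k̊ sends a set to the complete graph with semiedges on it, is a right adjoint functor; in particular it preserves all limits. -/

import Mathlib

open CategoryTheory

structure SymGraph where
  V : Type
  D : Type
  s : D → V
  t : D → V
  inv : D → D
  inv_inv : ∀ d, inv (inv d) = d
  s_inv : ∀ d, s (inv d) = t d

@[ext]
structure GraphHom (G H : SymGraph) where
  fV : G.V → H.V
  fD : G.D → H.D
  map_s : ∀ d, H.s (fD d) = fV (G.s d)
  map_t : ∀ d, H.t (fD d) = fV (G.t d)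
  map_inv : ∀ d, H.inv (fD d) = fD (G.inv d)

instance : Category SymGraph where
  Hom := GraphHom
  id G := ⟨id, id, fun _ => rfl, fun _ => rfl, fun _ => rfl⟩
  comp f g := ⟨g.fV ∘ f.fV, g.fD ∘ f.fD,
    fun d => by simp [g.map_s, f.map_s],
    fun d => by simp [g.map_t, f.map_t],
    fun d => by simp [g.map_inv, f.map_inv]⟩

/-- The complete graph with semiedges on a set `X`. -/
def kGraph (X : Type) : SymGraph where
  V := X
  D := X × X
  s := fun p => p.1
  t := fun p => p.2
  inv := fun p => (p.2, p.1)
  inv_inv := fun _ => rfl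
  s_inv := fun _ => rfl

/-- The functor `k̊ : Set → Graph`. -/
def kFunctor : Type ⥤ SymGraph where
  obj := kGraph
  map f := ⟨f, fun p => (f p.1, f p.2), fun _ => rfl, fun _ => rfl, fun _ => rfl⟩

/-- The functor `K̊ = k̊ ∘ U : Grp → Graph`. -/
def KFunctor : GrpCat.{0} ⥤ SymGraph := forget GrpCat.{0} ⋙ kFunctor


/-!
A graph map into the complete graph `k̊ X` is determined by its vertex map `f`, sending a dart `d`
to `(f (s d), f (t d))`; so the vertex functor `Graph ⥤ Set` is left adjoint to `k̊`. Composing with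
the free group ⊣ forgetful adjunction shows that `K̊ = k̊ ∘ U` has the left adjoint `F ∘ V`.
-/

namespace SymGraph

theorem t_inv (G : SymGraph) (d : G.D) : G.t (G.inv d) = G.s d := by
  rw [← G.s_inv, G.inv_inv]

def vertexFunctor : SymGraph ⥤ Type where
  obj G := G.V
  map f := TypeCat.ofHom f.fV

def homKGraphEquiv (G : SymGraph) (X : Type) : (G.V ⟶ X) ≃ (G ⟶ kFunctor.obj X) where
  toFun f :=
    { fV := f
      fD := fun d => (f (G.s d), f (G.t d))
      map_s := fun _ => rfl
      map_t := fun _ => rfl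
      map_inv := fun d => by
        change (f (G.t d), f (G.s d)) = (f (G.s (G.inv d)), f (G.t (G.inv d)))
        rw [G.s_inv, G.t_inv] }
  invFun φ := TypeCat.ofHom φ.fV
  left_inv _ := rfl
  right_inv φ := GraphHom.ext rfl <| funext fun d => Prod.ext (φ.map_s d).symm (φ.map_t d).symm

def vertexFunctorAdjKFunctor : vertexFunctor ⊣ kFunctor :=
  Adjunction.mkOfHomEquiv
    { homEquiv := homKGraphEquiv
      homEquiv_naturality_left_symm := fun _ _ => rfl
      homEquiv_naturality_right := fun _ _ => rfl }

end SymGraph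

def freeGroupOnVerticesAdjKFunctor : (SymGraph.vertexFunctor ⋙ GrpCat.free.{0}) ⊣ KFunctor :=
  SymGraph.vertexFunctorAdjKFunctor.comp GrpCat.adj

/-- `K̊` is a right adjoint; in particular it preserves all limits. -/
theorem KFunctor_isRightAdjoint :
    KFunctor.IsRightAdjoint ∧ Nonempty (Limits.PreservesLimits KFunctor) :=
  ⟨freeGroupOnVerticesAdjKFunctor.isRightAdjoint,
    ⟨freeGroupOnVerticesAdjKFunctor.rightAdjoint_preservesLimits⟩⟩
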